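/- Let 1 ≤ d_1 ≤ d_2 ≤ d_3 be integers with d_3 ≥ d_1 + d_2, and write f_{d_1}·f_{d_2}·f_{d_3} = ∑_{i=0}^{d_1+d_2+d_3} b_i t^i. Then the coefficients b_i are strictly increasing for 0 ≤ i ≤ d_1 + d_2, constant for d_1 + d_2 ≤ i ≤ d_3, and strictly decreasing for d_3 ≤ i ≤ d_1 + d_2 + d_3. -/

import Mathlib

open Polynomial

/-- `fpoly d` is the polynomial `f_d = 1 + t + t^2 + ⋯ + t^d`. -/
noncomputable def fpoly (d : ℕ) : Polynomial ℝ :=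
  ∑ i ∈ Finset.range (d + 1), Polynomial.X ^ i

/-- A sequence `a_0, …, a_d` is strictly unimodal if, for `d = 2m`,
`a_0 < a_1 < ⋯ < a_m > a_{m+1} > ⋯ > a_{2m}`, and for `d = 2m+1`,
`a_0 < a_1 < ⋯ < a_m = a_{m+1} > a_{m+2} > ⋯ > a_{2m+1}`. -/
def StrictlyUnimodalSeq (d : ℕ) (a : ℕ → ℝ) : Prop :=
  (∀ i, i < d / 2 → a i < a (i + 1)) ∧
  (Odd d → a (d / 2) = a (d / 2 + 1)) ∧
  (∀ i, (d + 1) / 2 ≤ i → i < d → a (i + 1) < a i)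

/-- The sequence `a` strictly increases on `[0, e]`, is constant on `[e, p]`,
and strictly decreases on `[p, D]`. -/
def IncConstDec (a : ℕ → ℝ) (e p D : ℕ) : Prop :=
  (∀ i, i < e → a i < a (i + 1)) ∧
  (∀ i, e ≤ i → i < p → a i = a (i + 1)) ∧
  (∀ i, p ≤ i → i < D → a (i + 1) < a i)

/-!
Write `q = f_{d₁} f_{d₂}`, whose coefficients `a_k` are positive exactly for `k ≤ d₁ + d₂`.
Since `f_d (t - 1) = t^{d+1} - 1`, the coefficients `b_n` of `q f_d` satisfy
`b_{n+1} - b_n = a_{n+1} - a_{n-d}` (the last term only when `d ≤ n`). For `d = d₃ ≥ d₁ + d₂`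
at most one of the two terms is nonzero on each of the three ranges, which fixes the sign.
-/

lemma coeff_fpoly (d k : ℕ) : (fpoly d).coeff k = if k ≤ d then 1 else 0 := by
  simp [fpoly, coeff_X_pow]

lemma natDegree_fpoly_le (d : ℕ) : (fpoly d).natDegree ≤ d :=
  natDegree_le_iff_coeff_eq_zero.2 fun k hk => by simp [coeff_fpoly, not_le.2 hk]

lemma coeff_mul_fpoly_succ (q : ℝ[X]) (d n : ℕ) :
    (q * fpoly d).coeff (n + 1) =
      (q * fpoly d).coeff n + q.coeff (n + 1) - if d ≤ n then q.coeff (n - d) else 0 := by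
  have h : q * fpoly d * X - q * fpoly d = q * X ^ (d + 1) - q := by
    rw [← mul_sub_one, mul_assoc, fpoly, geom_sum_mul, mul_sub_one]
  have := congrArg (coeff · (n + 1)) h
  simp only [coeff_sub, coeff_mul_X, coeff_mul_X_pow', Nat.add_le_add_iff_right,
    Nat.add_sub_add_right] at this
  split_ifs at this ⊢ <;> linarith

lemma coeff_fpoly_mul_fpoly_pos {d₁ d₂ k : ℕ} (hk : k ≤ d₁ + d₂) :
    0 < (fpoly d₁ * fpoly d₂).coeff k := by
  rw [coeff_mul]
  refine Finset.sum_pos' (fun x _ => ?_) ⟨(min k d₁, k - min k d₁), ?_, ?_⟩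
  · simp only [coeff_fpoly]
    split_ifs <;> norm_num
  · rw [Finset.HasAntidiagonal.mem_antidiagonal]
    omega
  · simp only [coeff_fpoly]
    rw [if_pos (min_le_right k d₁), if_pos (by omega)]
    norm_num

lemma coeff_fpoly_mul_fpoly_eq_zero {d₁ d₂ k : ℕ} (hk : d₁ + d₂ < k) :
    (fpoly d₁ * fpoly d₂).coeff k = 0 :=
  coeff_eq_zero_of_natDegree_lt <| natDegree_mul_le.trans_lt <|
    (add_le_add (natDegree_fpoly_le d₁) (natDegree_fpoly_le d₂)).trans_lt hk

theorem fpoly_triple_mul_incConstDec_general (d₁ d₂ d₃ : ℕ)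
    (h3 : d₁ + d₂ ≤ d₃) :
    IncConstDec ((fpoly d₁ * fpoly d₂ * fpoly d₃).coeff) (d₁ + d₂) d₃ (d₁ + d₂ + d₃) := by
  refine ⟨fun i hi => ?_, fun i hi₁ hi₂ => ?_, fun i hi₁ hi₂ => ?_⟩ <;>
    have step := coeff_mul_fpoly_succ (fpoly d₁ * fpoly d₂) d₃ i
  · rw [if_neg (by omega)] at step
    linarith [coeff_fpoly_mul_fpoly_pos (show i + 1 ≤ d₁ + d₂ by omega)]
  · rw [if_neg (by omega), coeff_fpoly_mul_fpoly_eq_zero (by omega)] at step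
    linarith
  · rw [if_pos hi₁, coeff_fpoly_mul_fpoly_eq_zero (by omega)] at step
    linarith [coeff_fpoly_mul_fpoly_pos (show i - d₃ ≤ d₁ + d₂ by omega)]

/-- For `1 ≤ d₁ ≤ d₂ ≤ d₃` with `d₃ ≥ d₁ + d₂`, the coefficients of
`f_{d₁}·f_{d₂}·f_{d₃}` strictly increase on `[0, d₁+d₂]`, are constant on `[d₁+d₂, d₃]`,
and strictly decrease on `[d₃, d₁+d₂+d₃]`. -/
theorem fpoly_triple_mul_incConstDec (d₁ d₂ d₃ : ℕ)
    (h1 : 1 ≤ d₁) (h12 : d₁ ≤ d₂) (h23 : d₂ ≤ d₃) (h3 : d₁ + d₂ ≤ d₃) :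
    IncConstDec ((fpoly d₁ * fpoly d₂ * fpoly d₃).coeff) (d₁ + d₂) d₃ (d₁ + d₂ + d₃) :=
  fpoly_triple_mul_incConstDec_general d₁ d₂ d₃ h3
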